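/- Let Γ be a finite connected tetravalent graph, G ≤ Aut(Γ) with Γ G-arc-transitive, and u a vertex of Γ. Suppose M is a subgroup of G maximal subject to Γ being M-half-arc-transitive, and suppose M_u^{Γ(u)} is a normal subgroup of G_u^{Γ(u)}. Then the subgroup of G_u consisting of all elements that stabilize setwise each orbit of M_u on Γ(u) equals M_u. -/

import Mathlib

open SimpleGraph

variable {V : Type*}

/-- The automorphism group of a simple graph, as a subgroup of the group of
permutations of the vertex set. -/
def autGroup (Γ : SimpleGraph V) : Subgroup (Equiv.Perm V) where
  carrier := {g | ∀ u v : V, Γ.Adj (g u) (g v) ↔ Γ.Adj u v}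
  one_mem' := by intro u v; simp
  mul_mem' := by
    intro a b ha hb u v
    rw [Equiv.Perm.mul_apply, Equiv.Perm.mul_apply, ha, hb]
  inv_mem' := by
    intro a ha u v
    simpa using (ha (a⁻¹ u) (a⁻¹ v)).symm

/-- `M` is transitive on the vertices of a graph on `V`. -/
def VertexTransitive (_Γ : SimpleGraph V) (M : Subgroup (Equiv.Perm V)) : Prop :=
  ∀ u v : V, ∃ g ∈ M, g u = v

/-- `M` is transitive on the edges of `Γ`. -/
def EdgeTransitive (Γ : SimpleGraph V) (M : Subgroup (Equiv.Perm V)) : Prop :=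
  ∀ u v x y : V, Γ.Adj u v → Γ.Adj x y →
    ∃ g ∈ M, (g u = x ∧ g v = y) ∨ (g u = y ∧ g v = x)

/-- `M` is transitive on the arcs (ordered pairs of adjacent vertices) of `Γ`. -/
def ArcTransitive (Γ : SimpleGraph V) (M : Subgroup (Equiv.Perm V)) : Prop :=
  ∀ u v x y : V, Γ.Adj u v → Γ.Adj x y → ∃ g ∈ M, g u = x ∧ g v = y

/-- `Γ` is `M`-half-arc-transitive: `M` consists of automorphisms of `Γ` and is
vertex- and edge- but not arc-transitive. -/
def HalfArcTransitive (Γ : SimpleGraph V) (M : Subgroup (Equiv.Perm V)) : Prop :=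
  M ≤ autGroup Γ ∧ VertexTransitive Γ M ∧ EdgeTransitive Γ M ∧ ¬ ArcTransitive Γ M

/-- `p`, restricted to `{0, …, s}`, is an `s`-arc of `Γ`. -/
def IsSArc (Γ : SimpleGraph V) (s : ℕ) (p : ℕ → V) : Prop :=
  (∀ i < s, Γ.Adj (p i) (p (i + 1))) ∧ ∀ j, 1 ≤ j → j < s → p (j - 1) ≠ p (j + 1)

/-- `Γ` is `(H, t)`-arc-transitive: `H` consists of automorphisms of `Γ` and is
transitive on the `t`-arcs of `Γ`. -/
def SArcTransitive (Γ : SimpleGraph V) (H : Subgroup (Equiv.Perm V)) (t : ℕ) : Prop :=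
  H ≤ autGroup Γ ∧ ∀ p q : ℕ → V, IsSArc Γ t p → IsSArc Γ t q →
    ∃ g ∈ H, ∀ i ≤ t, g (p i) = q i

/-- `Γ` is `(H, t)`-transitive: `(H, t)`-arc-transitive but not `(H, t+1)`-arc-transitive. -/
def STransitive (Γ : SimpleGraph V) (H : Subgroup (Equiv.Perm V)) (t : ℕ) : Prop :=
  SArcTransitive Γ H t ∧ ¬ SArcTransitive Γ H (t + 1)

/-- `M` is a maximal subgroup of `H`. -/
def IsMaximalSubgroup {G : Type*} [Group G] (M H : Subgroup G) : Prop :=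
  M < H ∧ ∀ N : Subgroup G, M ≤ N → N ≤ H → N = M ∨ N = H

/-- `(M, H)` is a maximal `(1/2, t)`-pair of `Γ`: `M` is a maximal subgroup of `H`,
`Γ` is `M`-half-arc-transitive, and `Γ` is `(H, t)`-transitive. -/
def MaximalHalfPair (Γ : SimpleGraph V) (M H : Subgroup (Equiv.Perm V)) (t : ℕ) : Prop :=
  IsMaximalSubgroup M H ∧ HalfArcTransitive Γ M ∧ STransitive Γ H t

/-- `Γ` is regular of valency `4`. -/
def Tetravalent (Γ : SimpleGraph V) : Prop := ∀ v : V, (Γ.neighborSet v).ncard = 4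

/-- `M` is a normal subgroup of `H` (both given as subgroups of an ambient group). -/
def NormalIn {G : Type*} [Group G] (M H : Subgroup G) : Prop :=
  ∀ h ∈ H, ∀ m ∈ M, h * m * h⁻¹ ∈ M

/-- The normal core of `M` in `H` (for `M ≤ H`): the largest normal subgroup of `H`
contained in `M`, namely the intersection of the `H`-conjugates of `M`. -/
def coreIn {G : Type*} [Group G] (H M : Subgroup G) : Subgroup G where
  carrier := {g | ∀ h ∈ H, h⁻¹ * g * h ∈ M}
  one_mem' := by intro h hh; simpa using M.one_mem
  mul_mem' := by
    intro a b ha hb h hh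
    have e : h⁻¹ * (a * b) * h = (h⁻¹ * a * h) * (h⁻¹ * b * h) := by group
    rw [e]; exact M.mul_mem (ha h hh) (hb h hh)
  inv_mem' := by
    intro a ha h hh
    have e : h⁻¹ * a⁻¹ * h = (h⁻¹ * a * h)⁻¹ := by group
    rw [e]; exact M.inv_mem (ha h hh)

/-- `K` is semiregular on `V`: all point stabilizers are trivial. -/
def Semiregular (K : Subgroup (Equiv.Perm V)) : Prop :=
  ∀ g ∈ K, ∀ v : V, g v = v → g = 1

/-- The normal quotient graph `Γ_K`: vertices are the `K`-orbits on `V`, two distinct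
orbits being adjacent iff `Γ` has an edge between them. -/
def quotientGraph (Γ : SimpleGraph V) (K : Subgroup (Equiv.Perm V)) :
    SimpleGraph (Quotient (MulAction.orbitRel K V)) where
  Adj x y := x ≠ y ∧ ∃ u v : V, Γ.Adj u v ∧
      Quotient.mk (MulAction.orbitRel K V) u = x ∧ Quotient.mk (MulAction.orbitRel K V) v = y
  symm := ⟨by
    rintro x y ⟨hxy, u, v, h, hu, hv⟩
    exact ⟨hxy.symm, v, u, h.symm, hv, hu⟩⟩
  loopless := ⟨fun x h => h.1 rfl⟩

/-- The set of elements of `H` stabilizing every `K`-orbit, i.e. the kernel of the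
action of `H` on the vertex set of the normal quotient graph `Γ_K`. -/
def quotKernelSet (H K : Subgroup (Equiv.Perm V)) : Set (Equiv.Perm V) :=
  {h | h ∈ H ∧ ∀ v : V, h v ∈ MulAction.orbit K v}

/-- The permutation group induced by `H` on the set of `K`-orbits; when `K` is the
kernel of the action of `H` on the set of `K`-orbits, this is (a faithful copy of)
the quotient group `H/K` acting on the normal quotient graph `Γ_K`. -/
def inducedQuot (K H : Subgroup (Equiv.Perm V)) :
    Subgroup (Equiv.Perm (Quotient (MulAction.orbitRel K V))) where
  carrier := {σ | ∃ h ∈ H, ∀ v : V,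
    σ (Quotient.mk (MulAction.orbitRel K V) v) = Quotient.mk (MulAction.orbitRel K V) (h v)}
  one_mem' := ⟨1, H.one_mem, fun v => by simp⟩
  mul_mem' := by
    rintro σ τ ⟨g, hg, hσ⟩ ⟨k, hk, hτ⟩
    refine ⟨g * k, H.mul_mem hg hk, fun v => ?_⟩
    rw [Equiv.Perm.mul_apply, hτ v, hσ (k v), Equiv.Perm.mul_apply]
  inv_mem' := by
    rintro σ ⟨g, hg, hσ⟩
    refine ⟨g⁻¹, H.inv_mem hg, fun v => ?_⟩
    have h1 := hσ (g⁻¹ v)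
    rw [show ∀ y, g (g⁻¹ y) = y from g.apply_symm_apply] at h1
    rw [← h1, show ∀ y, σ⁻¹ (σ y) = y from σ.symm_apply_apply]

/-- The permutation group `M_u^{Γ(u)}` induced on the neighbourhood `Γ(u)` by the
vertex stabilizer `M_u`. -/
def localGroup (Γ : SimpleGraph V) (M : Subgroup (Equiv.Perm V)) (u : V) :
    Subgroup (Equiv.Perm (Γ.neighborSet u)) where
  carrier := {σ | ∃ g ∈ M, g u = u ∧ ∀ v : Γ.neighborSet u, (σ v : V) = g (v : V)}
  one_mem' := ⟨1, M.one_mem, by simp, fun v => by simp⟩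
  mul_mem' := by
    rintro σ τ ⟨g, hg, hgu, hσ⟩ ⟨k, hk, hku, hτ⟩
    refine ⟨g * k, M.mul_mem hg hk, by rw [Equiv.Perm.mul_apply, hku, hgu], fun v => ?_⟩
    simp only [Equiv.Perm.mul_apply]
    rw [hσ (τ v), hτ v]
  inv_mem' := by
    rintro σ ⟨g, hg, hgu, hσ⟩
    have hgu' : g⁻¹ u = u := g.injective (by rw [show ∀ y, g (g⁻¹ y) = y from g.apply_symm_apply, hgu])
    refine ⟨g⁻¹, M.inv_mem hg, hgu', fun v => ?_⟩
    have h1 := hσ (σ⁻¹ v)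
    rw [show ∀ y, σ (σ⁻¹ y) = y from σ.apply_symm_apply] at h1
    rw [h1, show ∀ y, g⁻¹ (g y) = y from g.symm_apply_apply]

/-- The kernel `M_u^{[1]}` of the action of the vertex stabilizer `M_u` on the
neighbourhood `Γ(u)`, as a subgroup of `Equiv.Perm V`. -/
def localKernel (Γ : SimpleGraph V) (M : Subgroup (Equiv.Perm V)) (u : V) :
    Subgroup (Equiv.Perm V) :=
  (M ⊓ MulAction.stabilizer (Equiv.Perm V) u) ⊓
    ⨅ v ∈ Γ.neighborSet u, MulAction.stabilizer (Equiv.Perm V) v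

/-- The complete bipartite graph `K_{5,5}` minus a perfect matching. -/
def K55minusMatching : SimpleGraph (Fin 2 × Fin 5) where
  Adj x y := x.1 ≠ y.1 ∧ x.2 ≠ y.2
  symm := ⟨by rintro x y ⟨h1, h2⟩; exact ⟨h1.symm, h2.symm⟩⟩
  loopless := ⟨fun x h => h.1 rfl⟩

instance : Fact (Nat.Prime 5) := ⟨by norm_num⟩
instance : Fact (Nat.Prime 7) := ⟨by norm_num⟩

/-- The one-dimensional affine group `AGL_1(p)`: the group of affine permutations
`x ↦ a * x + b` (`a ≠ 0`) of `ZMod p`.  It is isomorphic to `Z_p ⋊ Z_{p-1}` with the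
faithful action; for `p = 5` it is the Frobenius group `Z_5 ⋊ Z_4` of order `20`. -/
def AGL1 (p : ℕ) [Fact (Nat.Prime p)] : Subgroup (Equiv.Perm (ZMod p)) where
  carrier := {f | ∃ a b : ZMod p, a ≠ 0 ∧ ∀ x, f x = a * x + b}
  one_mem' := ⟨1, 0, one_ne_zero, fun x => by simp⟩
  mul_mem' := by
    rintro f g ⟨a1, b1, ha1, hf⟩ ⟨a2, b2, ha2, hg⟩
    refine ⟨a1 * a2, a1 * b2 + b1, mul_ne_zero ha1 ha2, fun x => ?_⟩
    rw [Equiv.Perm.mul_apply, hg, hf]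
    ring
  inv_mem' := by
    rintro f ⟨a, b, ha, hf⟩
    refine ⟨a⁻¹, -(a⁻¹ * b), inv_ne_zero ha, fun x => ?_⟩
    have h1 : f (a⁻¹ * x + -(a⁻¹ * b)) = x := by
      rw [hf]
      field_simp
      ring
    rw [← h1, show ∀ y, f⁻¹ (f y) = y from f.symm_apply_apply, h1]

/-- The Cayley graph `Cay(G, S)`: for an inverse-closed `S ⊆ G \ {1}`, `x` and `y`
are adjacent iff `y * x⁻¹ ∈ S`. -/
def cayleyGraph (G : Type*) [Group G] (S : Set G) : SimpleGraph G :=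
  SimpleGraph.fromRel (fun x y => y * x⁻¹ ∈ S)

/-- The image `R(G)` of the right regular representation of `G` in `Equiv.Perm G`. -/
def rightRegular (G : Type*) [Group G] : Subgroup (Equiv.Perm G) where
  carrier := {σ | ∃ g : G, ∀ x : G, σ x = x * g}
  one_mem' := ⟨1, fun x => by simp⟩
  mul_mem' := by
    rintro σ τ ⟨g, hσ⟩ ⟨k, hτ⟩
    exact ⟨k * g, fun x => by rw [Equiv.Perm.mul_apply, hτ, hσ, mul_assoc]⟩
  inv_mem' := by
    rintro σ ⟨g, hσ⟩
    refine ⟨g⁻¹, fun x => ?_⟩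
    have h1 : σ (x * g⁻¹) = x := by rw [hσ, inv_mul_cancel_right]
    rw [← h1, show ∀ y, σ⁻¹ (σ y) = y from σ.symm_apply_apply, h1]

/-- The coordinate-swapping automorphism of `A × A`. -/
def swapAut (A : Type*) [Group A] : MulAut (A × A) := MulEquiv.prodComm

lemma swapAut_sq (A : Type*) [Group A] : swapAut A ^ 2 = 1 := by
  rw [pow_two]
  exact MulEquiv.ext fun p => rfl

/-- The homomorphism `Z_2 →* Aut(A × A)` sending the generator to the coordinate swap. -/
def swapHom (A : Type*) [Group A] : Multiplicative (ZMod 2) →* MulAut (A × A) where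
  toFun x := swapAut A ^ (Multiplicative.toAdd x).val
  map_one' := by simp
  map_mul' x y := by
    have h2 : swapAut A ^ 2 = 1 := swapAut_sq A
    show swapAut A ^ (Multiplicative.toAdd (x * y)).val = _
    have e : Multiplicative.toAdd (x * y) = Multiplicative.toAdd x + Multiplicative.toAdd y := rfl
    rw [e, ZMod.val_add, ← pow_eq_pow_mod _ h2, pow_add]

/-- The semidirect product `(A × A) ⋊ Z_2` in which `Z_2` swaps the two direct
factors; for a group `A` this is the wreath product `A ≀ Z_2`. -/
abbrev wreathZ2 (A : Type*) [Group A] :=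
  SemidirectProduct (A × A) (Multiplicative (ZMod 2)) (swapHom A)

/-- The projective general linear group `PGL_2(7) = GL_2(7)/Z(GL_2(7))`. -/
abbrev PGL2_7 :=
  Matrix.GeneralLinearGroup (Fin 2) (ZMod 7) ⧸
    Subgroup.center (Matrix.GeneralLinearGroup (Fin 2) (ZMod 7))

/-- The semidirect product `Z_3 ⋊ S_4` of order 72 in which the kernel of the action
of `S_4` on `Z_3` is `A_4`: concretely, the subgroup of `S_3 × S_4` consisting of the
pairs of permutations of equal sign. -/
def Z3rtimesS4 : Subgroup (Equiv.Perm (Fin 3) × Equiv.Perm (Fin 4)) :=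
  MonoidHom.ker ((Equiv.Perm.sign.comp (MonoidHom.fst (Equiv.Perm (Fin 3)) (Equiv.Perm (Fin 4)))) *
    (Equiv.Perm.sign.comp (MonoidHom.snd (Equiv.Perm (Fin 3)) (Equiv.Perm (Fin 4)))))

/-- `C` is (the vertex set of) an `M`-alternating cycle of `Γ`: a cycle along which
any two consecutive arcs lie in different `M`-orbits, i.e. consecutive edges have
opposite orientations in the orientations of `Γ` given by the two `M`-orbits on arcs. -/
def IsAltCycle (Γ : SimpleGraph V) (M : Subgroup (Equiv.Perm V)) (C : Set V) : Prop :=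
  ∃ n : ℕ, 3 ≤ n ∧ ∃ c : ZMod n → V, Function.Injective c ∧ Set.range c = C ∧
    (∀ i, Γ.Adj (c i) (c (i + 1))) ∧
    (∀ i, ¬ ∃ g ∈ M, g (c i) = c (i + 1) ∧ g (c (i + 1)) = c (i + 2))

/-- The graph `Alt_M(Γ)` of `M`-alternating cycles: vertices are the `M`-alternating
cycles of `Γ`, two of them being adjacent iff they have a common vertex. -/
def altGraph (Γ : SimpleGraph V) (M : Subgroup (Equiv.Perm V)) :
    SimpleGraph {C : Set V // IsAltCycle Γ M C} where
  Adj C D := C ≠ D ∧ (C.1 ∩ D.1).Nonempty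
  symm := ⟨by
    rintro C D ⟨h1, x, hx⟩
    exact ⟨h1.symm, x, hx.2, hx.1⟩⟩
  loopless := ⟨fun C h => h.1 rfl⟩

theorem Equiv.Perm.apply_inv_self {α : Type*} (f : Equiv.Perm α) (x : α) : f (f⁻¹ x) = x :=
  f.apply_symm_apply x

theorem Equiv.Perm.inv_apply_self {α : Type*} (f : Equiv.Perm α) (x : α) : f⁻¹ (f x) = x :=
  f.symm_apply_apply x

/-! ### Auxiliary machinery for `statement4` -/

/-- The `M`-orbit of the arc `(u, v0)`, as a relation on vertices. -/
private def DRel (M : Subgroup (Equiv.Perm V)) (u v0 : V) (x y : V) : Prop :=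
  ∃ m ∈ M, m u = x ∧ m v0 = y

private lemma DRel_adj {Γ : SimpleGraph V} {M : Subgroup (Equiv.Perm V)} {u v0 : V}
    (hMaut : M ≤ autGroup Γ) (hadj : Γ.Adj u v0) {x y : V} (h : DRel M u v0 x y) :
    Γ.Adj x y := by
  obtain ⟨m, hm, hx, hy⟩ := h
  rw [← hx, ← hy]
  exact (hMaut hm u v0).mpr hadj

private lemma DRel_mul {M : Subgroup (Equiv.Perm V)} {u v0 : V} {m : Equiv.Perm V}
    (hm : m ∈ M) {x y : V} (h : DRel M u v0 x y) : DRel M u v0 (m x) (m y) := by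
  obtain ⟨n, hn, hx, hy⟩ := h
  exact ⟨m * n, M.mul_mem hm hn, by rw [Equiv.Perm.mul_apply, hx],
    by rw [Equiv.Perm.mul_apply, hy]⟩

private lemma DRel_out_orbit {M : Subgroup (Equiv.Perm V)} {u v0 : V} {x y y' : V}
    (h : DRel M u v0 x y) (h' : DRel M u v0 x y') :
    ∃ m ∈ M, m x = x ∧ m y = y' := by
  obtain ⟨m1, hm1, h1x, h1y⟩ := h
  obtain ⟨m2, hm2, h2x, h2y⟩ := h'
  have e1 : m1⁻¹ x = u := by rw [← h1x, Equiv.Perm.inv_apply_self]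
  have e2 : m1⁻¹ y = v0 := by rw [← h1y, Equiv.Perm.inv_apply_self]
  refine ⟨m2 * m1⁻¹, M.mul_mem hm2 (M.inv_mem hm1), ?_, ?_⟩
  · rw [Equiv.Perm.mul_apply, e1, h2x]
  · rw [Equiv.Perm.mul_apply, e2, h2y]

private lemma DRel_in_orbit {M : Subgroup (Equiv.Perm V)} {u v0 : V} {x y y' : V}
    (h : DRel M u v0 y x) (h' : DRel M u v0 y' x) :
    ∃ m ∈ M, m x = x ∧ m y = y' := by
  obtain ⟨m1, hm1, h1u, h1v⟩ := h
  obtain ⟨m2, hm2, h2u, h2v⟩ := h'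
  have e1 : m1⁻¹ x = v0 := by rw [← h1v, Equiv.Perm.inv_apply_self]
  have e2 : m1⁻¹ y = u := by rw [← h1u, Equiv.Perm.inv_apply_self]
  refine ⟨m2 * m1⁻¹, M.mul_mem hm2 (M.inv_mem hm1), ?_, ?_⟩
  · rw [Equiv.Perm.mul_apply, e1, h2v]
  · rw [Equiv.Perm.mul_apply, e2, h2u]

private lemma DRel_asym {Γ : SimpleGraph V} {M : Subgroup (Equiv.Perm V)} {u v0 : V}
    (het : EdgeTransitive Γ M) (hna : ¬ ArcTransitive Γ M) (hadj : Γ.Adj u v0)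
    {x y : V} (h : DRel M u v0 x y) (h' : DRel M u v0 y x) : False := by
  obtain ⟨m1, hm1, h1u, h1v⟩ := h
  obtain ⟨m2, hm2, h2u, h2v⟩ := h'
  apply hna
  have hwu : (m1⁻¹ * m2) u = v0 := by
    rw [Equiv.Perm.mul_apply, h2u, ← h1v, Equiv.Perm.inv_apply_self]
  have hwv : (m1⁻¹ * m2) v0 = u := by
    rw [Equiv.Perm.mul_apply, h2v, ← h1u, Equiv.Perm.inv_apply_self]
  have hwM : m1⁻¹ * m2 ∈ M := M.mul_mem (M.inv_mem hm1) hm2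
  have key : ∀ a b : V, Γ.Adj a b → ∃ g ∈ M, g u = a ∧ g v0 = b := by
    intro a b hab
    obtain ⟨g, hg, hc⟩ := het u v0 a b hadj hab
    rcases hc with ⟨e1, e2⟩ | ⟨e1, e2⟩
    · exact ⟨g, hg, e1, e2⟩
    · exact ⟨g * (m1⁻¹ * m2), M.mul_mem hg hwM,
        by rw [Equiv.Perm.mul_apply, hwu, e2],
        by rw [Equiv.Perm.mul_apply, hwv, e1]⟩
  intro a b c d hab hcd
  obtain ⟨g1, hg1, e1a, e1b⟩ := key a b hab
  obtain ⟨g2, hg2, e2c, e2d⟩ := key c d hcd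
  have f1 : g1⁻¹ a = u := by rw [← e1a, Equiv.Perm.inv_apply_self]
  have f2 : g1⁻¹ b = v0 := by rw [← e1b, Equiv.Perm.inv_apply_self]
  exact ⟨g2 * g1⁻¹, M.mul_mem hg2 (M.inv_mem hg1),
    by rw [Equiv.Perm.mul_apply, f1, e2c],
    by rw [Equiv.Perm.mul_apply, f2, e2d]⟩

/-- The key local lemma: conjugation inside `G_u` preserves `M_u`-orbits on `Γ(u)`,
as a consequence of `M_u^{Γ(u)} ⊴ G_u^{Γ(u)}`. -/
private lemma orbit_map {Γ : SimpleGraph V} {M G : Subgroup (Equiv.Perm V)} {u : V}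
    (hG : G ≤ autGroup Γ) (hMG : M ≤ G)
    (hnormal : NormalIn (localGroup Γ M u) (localGroup Γ G u))
    {h : Equiv.Perm V} (hh : h ∈ G) (hhu : h u = u)
    {y : V} (hy : y ∈ Γ.neighborSet u)
    {m : Equiv.Perm V} (hm : m ∈ M) (hmu : m u = u) :
    ∃ m' ∈ M, m' u = u ∧ m' (h y) = h (m y) := by
  have hperm : ∀ {k : Equiv.Perm V}, k ∈ autGroup Γ → k u = u →
      ∀ x : V, x ∈ Γ.neighborSet u ↔ k x ∈ Γ.neighborSet u := by
    intro k hk hku x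
    simp only [SimpleGraph.mem_neighborSet]
    conv_rhs => rw [← hku]
    exact (hk u x).symm
  have hhG : h ∈ autGroup Γ := hG hh
  have hmG : m ∈ autGroup Γ := hG (hMG hm)
  set σ : Equiv.Perm (Γ.neighborSet u) := h.subtypePerm (fun x => (hperm hhG hhu x).symm) with hσdef
  set τ : Equiv.Perm (Γ.neighborSet u) := m.subtypePerm (fun x => (hperm hmG hmu x).symm) with hτdef
  have hσG : σ ∈ localGroup Γ G u := ⟨h, hh, hhu, fun v => rfl⟩
  have hτM : τ ∈ localGroup Γ M u := ⟨m, hm, hmu, fun v => rfl⟩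
  obtain ⟨m', hm', hm'u, hagree⟩ := hnormal σ hσG τ hτM
  refine ⟨m', hm', hm'u, ?_⟩
  have hL : (σ * τ * σ⁻¹) (σ ⟨y, hy⟩) = σ (τ ⟨y, hy⟩) := by
    rw [Equiv.Perm.mul_apply, Equiv.Perm.mul_apply, Equiv.Perm.inv_apply_self]
  have := hagree (σ ⟨y, hy⟩)
  rw [hL] at this
  have hcoe1 : ((σ (τ ⟨y, hy⟩) : Γ.neighborSet u) : V) = h (m y) := rfl
  have hcoe2 : ((σ ⟨y, hy⟩ : Γ.neighborSet u) : V) = h y := rfl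
  rw [hcoe1, hcoe2] at this
  exact this.symm

/-- Vertex-transitivity of `M` transfers the local normality from `u` to every
vertex: any `g ∈ G` maps `M_x`-orbits on `Γ(x)` into `M_{gx}`-orbits on `Γ(gx)`. -/
private lemma orbit_map_all {Γ : SimpleGraph V} {M G : Subgroup (Equiv.Perm V)} {u : V}
    (hG : G ≤ autGroup Γ) (hMG : M ≤ G) (hvt : VertexTransitive Γ M)
    (hnormal : NormalIn (localGroup Γ M u) (localGroup Γ G u))
    {g : Equiv.Perm V} (hg : g ∈ G) {x y : V} (hxy : Γ.Adj x y)
    {m : Equiv.Perm V} (hm : m ∈ M) (hmx : m x = x) :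
    ∃ m' ∈ M, m' (g x) = g x ∧ m' (g y) = g (m y) := by
  obtain ⟨m0, hm0, hm0u⟩ := hvt u x
  obtain ⟨m1, hm1, hm1u⟩ := hvt u (g x)
  have hhG : m1⁻¹ * g * m0 ∈ G :=
    G.mul_mem (G.mul_mem (G.inv_mem (hMG hm1)) hg) (hMG hm0)
  have hgx : m1⁻¹ (g x) = u := by rw [← hm1u, Equiv.Perm.inv_apply_self]
  have hhu : (m1⁻¹ * g * m0) u = u := by
    rw [Equiv.Perm.mul_apply, Equiv.Perm.mul_apply, hm0u, hgx]
  have hm0z : m0 (m0⁻¹ y) = y := Equiv.Perm.apply_inv_self m0 y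
  have hzmem : m0⁻¹ y ∈ Γ.neighborSet u := by
    have haut := hG (hMG hm0)
    have h1 : Γ.Adj (m0 u) (m0 (m0⁻¹ y)) := by rw [hm0u, hm0z]; exact hxy
    exact (haut u (m0⁻¹ y)).mp h1
  have hmtM : m0⁻¹ * m * m0 ∈ M := M.mul_mem (M.mul_mem (M.inv_mem hm0) hm) hm0
  have hm0x : m0⁻¹ x = u := by rw [← hm0u, Equiv.Perm.inv_apply_self]
  have hmtu : (m0⁻¹ * m * m0) u = u := by
    rw [Equiv.Perm.mul_apply, Equiv.Perm.mul_apply, hm0u, hmx, hm0x]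
  obtain ⟨m'', hm'', hm''u, hkey⟩ := orbit_map hG hMG hnormal hhG hhu hzmem hmtM hmtu
  have hhz : (m1⁻¹ * g * m0) (m0⁻¹ y) = m1⁻¹ (g y) := by
    rw [Equiv.Perm.mul_apply, Equiv.Perm.mul_apply, hm0z]
  have hmtz : (m0⁻¹ * m * m0) (m0⁻¹ y) = m0⁻¹ (m y) := by
    rw [Equiv.Perm.mul_apply, Equiv.Perm.mul_apply, hm0z]
  have hhmtz : (m1⁻¹ * g * m0) ((m0⁻¹ * m * m0) (m0⁻¹ y)) = m1⁻¹ (g (m y)) := by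
    rw [hmtz, Equiv.Perm.mul_apply, Equiv.Perm.mul_apply,
      Equiv.Perm.apply_inv_self]
  rw [hhz, hhmtz] at hkey
  refine ⟨m1 * m'' * m1⁻¹, M.mul_mem (M.mul_mem hm1 hm'') (M.inv_mem hm1), ?_, ?_⟩
  · rw [Equiv.Perm.mul_apply, Equiv.Perm.mul_apply, hgx, hm''u, hm1u]
  · rw [Equiv.Perm.mul_apply, Equiv.Perm.mul_apply, hkey,
      Equiv.Perm.apply_inv_self]

/-- The crucial propagation step: if `g ∈ G` respects the orientation `D` at one
arc based at `x`, it respects `D` on all arcs into and out of `x`. -/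
private lemma strong_of_out {Γ : SimpleGraph V} {M G : Subgroup (Equiv.Perm V)}
    (hG : G ≤ autGroup Γ) (D : V → V → Prop)
    (hadjD : ∀ {x y : V}, D x y → Γ.Adj x y)
    (hedgeD : ∀ {x y : V}, Γ.Adj x y → D x y ∨ D y x)
    (hasym : ∀ {x y : V}, D x y → D y x → False)
    (hcoapex : ∀ x : V, ∃ y, D y x)
    (houtorb : ∀ {x y y' : V}, D x y → D x y' → ∃ m ∈ M, m x = x ∧ m y = y')
    (hinorb : ∀ {x y y' : V}, D y x → D y' x → ∃ m ∈ M, m x = x ∧ m y = y')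
    (hfix : ∀ {m : Equiv.Perm V}, m ∈ M → ∀ {x y : V}, m x = x → D x y → D x (m y))
    (homa : ∀ {g : Equiv.Perm V}, g ∈ G → ∀ {x y : V}, Γ.Adj x y →
      ∀ {m : Equiv.Perm V}, m ∈ M → m x = x →
      ∃ m' ∈ M, m' (g x) = g x ∧ m' (g y) = g (m y))
    {g : Equiv.Perm V} (hg : g ∈ G) {x y0 : V}
    (h1 : D x y0) (h2 : D (g x) (g y0)) :
    (∀ y, D x y → D (g x) (g y)) ∧ (∀ y, D y x → D (g y) (g x)) := by
  have hout : ∀ y, D x y → D (g x) (g y) := by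
    intro y hxy
    obtain ⟨m, hm, hmx, hmy⟩ := houtorb h1 hxy
    obtain ⟨m', hm', hmx', hmy'⟩ := homa hg (hadjD h1) hm hmx
    have hres := hfix hm' hmx' h2
    rwa [hmy', hmy] at hres
  refine ⟨hout, ?_⟩
  intro y hyx
  have hadj' : Γ.Adj (g y) (g x) := (hG hg y x).mpr (hadjD hyx)
  rcases hedgeD hadj' with hgood | hbad
  · exact hgood
  · exfalso
    obtain ⟨z, hz⟩ := hcoapex (g x)
    have hgw : g (g⁻¹ z) = z := Equiv.Perm.apply_inv_self g z
    have hxw : Γ.Adj x (g⁻¹ z) := by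
      have hadjz : Γ.Adj (g x) (g (g⁻¹ z)) := by rw [hgw]; exact (hadjD hz).symm
      exact (hG hg x (g⁻¹ z)).mp hadjz
    rcases hedgeD hxw with hxw1 | hxw2
    · have hres := hout _ hxw1
      rw [hgw] at hres
      exact hasym hres hz
    · obtain ⟨m, hm, hmx, hmy⟩ := hinorb hyx hxw2
      obtain ⟨m', hm', hmx', hmy'⟩ := homa hg (hadjD hyx).symm hm hmx
      have hres := hfix hm' hmx' hbad
      rw [hmy', hmy, hgw] at hres
      exact hasym hres hz

/-- A predicate closed under adjacency and holding somewhere holds everywhere on a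
connected graph. -/
private lemma propagate {Γ : SimpleGraph V} (hconn : Γ.Preconnected) (S : V → Prop)
    (hstep : ∀ x x' : V, S x → Γ.Adj x x' → S x') {u : V} (hSu : S u) : ∀ x, S x := by
  have hwalk : ∀ (a b : V), Γ.Walk a b → S a → S b := by
    intro a b w
    induction w with
    | nil => exact id
    | cons h p ih => exact fun ha => ih (hstep _ _ ha h)
  exact fun x => (hconn u x).elim fun w => hwalk u x w hSu

/-- The subgroup of `G` preserving a relation `D` on vertices. -/
private def presSub (G : Subgroup (Equiv.Perm V)) (D : V → V → Prop) :
    Subgroup (Equiv.Perm V) where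
  carrier := {g | g ∈ G ∧ ∀ x y : V, D x y ↔ D (g x) (g y)}
  one_mem' := ⟨G.one_mem, fun x y => by simp⟩
  mul_mem' := by
    rintro a b ⟨haG, ha⟩ ⟨hbG, hb⟩
    refine ⟨G.mul_mem haG hbG, fun x y => ?_⟩
    rw [Equiv.Perm.mul_apply, Equiv.Perm.mul_apply, ← ha (b x) (b y), ← hb x y]
  inv_mem' := by
    rintro a ⟨haG, ha⟩
    refine ⟨G.inv_mem haG, fun x y => ?_⟩
    have := ha (a⁻¹ x) (a⁻¹ y)
    simpa using this.symm


/-- Lemma 3.2(a): for a connected tetravalent `G`-arc-transitive graph with `M ≤ G`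
maximal subject to `Γ` being `M`-half-arc-transitive and `M_u^{Γ(u)} ⊴ G_u^{Γ(u)}`,
the subgroup of `G_u` stabilizing each orbit of `M_u` on `Γ(u)` setwise is `M_u`. -/
theorem statement4 {V : Type*} [Fintype V] (Γ : SimpleGraph V)
    (hconn : Γ.Connected) (htetra : Tetravalent Γ)
    (G : Subgroup (Equiv.Perm V)) (hG : G ≤ autGroup Γ) (hAT : ArcTransitive Γ G)
    (u : V) (M : Subgroup (Equiv.Perm V)) (hMG : M ≤ G)
    (hhat : HalfArcTransitive Γ M)
    (hmax : ∀ N : Subgroup (Equiv.Perm V), M ≤ N → N ≤ G → HalfArcTransitive Γ N → N = M)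
    (hnormal : NormalIn (localGroup Γ M u) (localGroup Γ G u)) :
    {g : Equiv.Perm V | g ∈ G ∧ g u = u ∧
        ∀ v : V, Γ.Adj u v → ∃ m ∈ M, m u = u ∧ m v = g v}
      = ↑(M ⊓ MulAction.stabilizer (Equiv.Perm V) u) := by
  obtain ⟨hMaut, hvt, het, hnat⟩ := hhat
  have hne : (Γ.neighborSet u).Nonempty := by
    apply Set.nonempty_of_ncard_ne_zero
    rw [htetra u]; norm_num
  obtain ⟨v0, hv0⟩ := hne
  have hadj : Γ.Adj u v0 := hv0
  have hDadj : ∀ {x y : V}, DRel M u v0 x y → Γ.Adj x y :=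
    fun h => DRel_adj hMaut hadj h
  have hDedge : ∀ {x y : V}, Γ.Adj x y → DRel M u v0 x y ∨ DRel M u v0 y x := by
    intro x y hxy
    obtain ⟨m, hm, hc⟩ := het u v0 x y hadj hxy
    rcases hc with ⟨e1, e2⟩ | ⟨e1, e2⟩
    · exact Or.inl ⟨m, hm, e1, e2⟩
    · exact Or.inr ⟨m, hm, e1, e2⟩
  have hDasym : ∀ {x y : V}, DRel M u v0 x y → DRel M u v0 y x → False :=
    fun h h' => DRel_asym het hnat hadj h h'
  have hDapex : ∀ x : V, ∃ y, DRel M u v0 x y := by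
    intro x
    obtain ⟨m, hm, hmu⟩ := hvt u x
    exact ⟨m v0, m, hm, hmu, rfl⟩
  have hDcoapex : ∀ x : V, ∃ y, DRel M u v0 y x := by
    intro x
    obtain ⟨m, hm, hmv⟩ := hvt v0 x
    exact ⟨m u, m, hm, rfl, hmv⟩
  have hfix : ∀ {m : Equiv.Perm V}, m ∈ M → ∀ {x y : V}, m x = x →
      DRel M u v0 x y → DRel M u v0 x (m y) := by
    intro m hm x y hmx h
    have := DRel_mul hm h
    rwa [hmx] at this
  have hfix' : ∀ {m : Equiv.Perm V}, m ∈ M → ∀ {x y : V}, m x = x →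
      DRel M u v0 y x → DRel M u v0 (m y) x := by
    intro m hm x y hmx h
    have := DRel_mul hm h
    rwa [hmx] at this
  have homa : ∀ {g : Equiv.Perm V}, g ∈ G → ∀ {x y : V}, Γ.Adj x y →
      ∀ {m : Equiv.Perm V}, m ∈ M → m x = x →
      ∃ m' ∈ M, m' (g x) = g x ∧ m' (g y) = g (m y) :=
    fun {g} hg {x y} hxy {m} hm hmx => orbit_map_all hG hMG hvt hnormal hg hxy hm hmx
  -- the orientation-preserving subgroup N := presSub G (DRel M u v0)
  have hMN : M ≤ presSub G (DRel M u v0) := by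
    intro m hm
    refine ⟨hMG hm, fun x y => ⟨fun h => DRel_mul hm h, fun h => ?_⟩⟩
    have := DRel_mul (M.inv_mem hm) h
    simpa using this
  have hNG : presSub G (DRel M u v0) ≤ G := fun _ h => h.1
  have hNhat : HalfArcTransitive Γ (presSub G (DRel M u v0)) := by
    refine ⟨fun k hk => hG (hNG hk), fun a b => ?_, fun a b c d h1 h2 => ?_, ?_⟩
    · obtain ⟨m, hm, hmeq⟩ := hvt a b
      exact ⟨m, hMN hm, hmeq⟩
    · obtain ⟨m, hm, hc⟩ := het a b c d h1 h2
      exact ⟨m, hMN hm, hc⟩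
    · intro hat
      obtain ⟨k, hkN, hku, hkv⟩ := hat u v0 v0 u hadj hadj.symm
      have h1 : DRel M u v0 u v0 := ⟨1, M.one_mem, rfl, rfl⟩
      have h2 : DRel M u v0 v0 u := by
        have := (hkN.2 u v0).mp h1
        rwa [hku, hkv] at this
      exact hDasym h1 h2
  have hNM : presSub G (DRel M u v0) = M := hmax _ hMN hNG hNhat
  ext g
  simp only [Set.mem_setOf_eq, SetLike.mem_coe, Subgroup.mem_inf,
    MulAction.mem_stabilizer_iff, Equiv.Perm.smul_def]
  constructor
  · rintro ⟨hgG, hgu, hloc⟩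
    have hstrongO : ∀ {x y0 : V}, DRel M u v0 x y0 → DRel M u v0 (g x) (g y0) →
        (∀ y, DRel M u v0 x y → DRel M u v0 (g x) (g y)) ∧
        (∀ y, DRel M u v0 y x → DRel M u v0 (g y) (g x)) :=
      fun h1 h2 => strong_of_out hG (DRel M u v0) hDadj hDedge hDasym hDcoapex
        (fun h h' => DRel_out_orbit h h') (fun h h' => DRel_in_orbit h h')
        hfix homa hgG h1 h2
    have hstrongI : ∀ {x y0 : V}, DRel M u v0 y0 x → DRel M u v0 (g y0) (g x) →
        (∀ y, DRel M u v0 x y → DRel M u v0 (g x) (g y)) ∧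
        (∀ y, DRel M u v0 y x → DRel M u v0 (g y) (g x)) := by
      intro x y0 h1 h2
      have hres := strong_of_out hG (fun a b => DRel M u v0 b a)
        (fun h => (hDadj h).symm)
        (fun h => (hDedge h).symm)
        (fun h h' => hDasym h' h)
        hDapex
        (fun h h' => DRel_in_orbit h h')
        (fun h h' => DRel_out_orbit h h')
        (fun {m} hm {x y} hmx h => hfix' hm hmx h)
        homa hgG h1 h2
      exact ⟨hres.2, hres.1⟩
    have hstrong : ∀ x : V,
        ((∃ y, DRel M u v0 x y ∧ DRel M u v0 (g x) (g y)) ∨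
          (∃ y, DRel M u v0 y x ∧ DRel M u v0 (g y) (g x))) →
        (∀ y, DRel M u v0 x y → DRel M u v0 (g x) (g y)) ∧
        (∀ y, DRel M u v0 y x → DRel M u v0 (g y) (g x)) := by
      rintro x (⟨y0, h1, h2⟩ | ⟨y0, h1, h2⟩)
      · exact hstrongO h1 h2
      · exact hstrongI h1 h2
    have hstep : ∀ x x' : V,
        ((∃ y, DRel M u v0 x y ∧ DRel M u v0 (g x) (g y)) ∨
          (∃ y, DRel M u v0 y x ∧ DRel M u v0 (g y) (g x))) → Γ.Adj x x' →
        ((∃ y, DRel M u v0 x' y ∧ DRel M u v0 (g x') (g y)) ∨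
          (∃ y, DRel M u v0 y x' ∧ DRel M u v0 (g y) (g x'))) := by
      intro x x' hx hxx'
      rcases hDedge hxx' with h | h
      · exact Or.inr ⟨x, h, (hstrong x hx).1 x' h⟩
      · exact Or.inl ⟨x, h, (hstrong x hx).2 x' h⟩
    have hSu : (∃ y, DRel M u v0 u y ∧ DRel M u v0 (g u) (g y)) ∨
        (∃ y, DRel M u v0 y u ∧ DRel M u v0 (g y) (g u)) := by
      obtain ⟨m, hm, hmu, hmv⟩ := hloc v0 hadj
      refine Or.inl ⟨v0, ⟨1, M.one_mem, rfl, rfl⟩, ?_⟩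
      rw [hgu]
      exact ⟨m, hm, hmu, hmv⟩
    have hallS := propagate hconn.preconnected _ hstep hSu
    have hfwd : ∀ x y : V, DRel M u v0 x y → DRel M u v0 (g x) (g y) :=
      fun x y h => (hstrong x (hallS x)).1 y h
    have hgN : g ∈ presSub G (DRel M u v0) := by
      refine ⟨hgG, fun x y => ⟨hfwd x y, fun h => ?_⟩⟩
      have hxy : Γ.Adj x y := (hG hgG x y).mp (hDadj h)
      rcases hDedge hxy with h' | h'
      · exact h'
      · exact (hDasym h (hfwd y x h')).elim
    rw [hNM] at hgN
    exact ⟨hgN, hgu⟩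
  · rintro ⟨hgM, hgu⟩
    exact ⟨hMG hgM, hgu, fun v hv => ⟨g, hgM, hgu, rfl⟩⟩
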